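/- arXiv:2311.08477 — 3 statements merged into one kernel-verified Lean document; each statement's English description precedes it below -/
import Mathlib

section
/- The T-linear map from M = (T·dx ⊕ T·dy)/(x·dy+y·dx) to ℂ[s]·ds ⊕ ℂ[t]·dt sending dx ↦ (ds,0) and dy ↦ (0,dt) is surjective with kernel generated by x·dy. -/
/- STATEMENT 2: The T-linear map from M = (T·dx ⊕ T·dy)/(x·dy+y·dx) to
   ℂ[s]·ds ⊕ ℂ[t]·dt sending dx ↦ (ds,0), dy ↦ (0,dt) is surjective with
   kernel generated by x·dy.  The target is a T-module via the normalization
   map φ : T → ℂ[s] × ℂ[t].  We state this at the level of the presentation: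
   F : T × T → ℂ[s] × ℂ[t], F(a,b) = ((φ a)₁, (φ b)₂) is additive,
   T-linear for the twisted action, surjective, and F v = 0 iff v lies in
   the relation submodule together with the T-span of (0, x) (= x·dy). -/

noncomputable section
open MvPolynomial

abbrev P : Type := MvPolynomial (Fin 2) ℂ

abbrev T : Type := P ⧸ Ideal.span ({X 0 * X 1} : Set P)

def x : T := Ideal.Quotient.mk _ (X 0)
def y : T := Ideal.Quotient.mk _ (X 1)

def rel : Submodule T (T × T) := Submodule.span T {(y, x)}

/-- The normalization map T → ℂ[s] × ℂ[t], x ↦ (s, 0), y ↦ (0, t). -/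
def φ : T →+* Polynomial ℂ × Polynomial ℂ :=
  Ideal.Quotient.lift _
    (aeval ![((Polynomial.X : Polynomial ℂ), 0), (0, (Polynomial.X : Polynomial ℂ))]).toRingHom
    (by
      intro a ha
      rw [Ideal.mem_span_singleton] at ha
      obtain ⟨c, rfl⟩ := ha
      simp [Prod.ext_iff])

/-- The map dx ↦ (ds, 0), dy ↦ (0, dt) on the presentation T·dx ⊕ T·dy. -/
def F : T × T → Polynomial ℂ × Polynomial ℂ := fun v => ((φ v.1).1, (φ v.2).2)

/-!
If an `R`-algebra `A` is generated by `u` and `v`, and `f : A → R[X]` sends `u ↦ X` and `v ↦ 0`,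
then `a ↦ a - f(a)(u)` lands in `(v)`, since modulo `v` it is a homomorphism killing both
generators; hence `ker f = (v)` and `p ↦ p(u)` is a section of `f`. For `T` the two branches
`fst ∘ φ` (with `u = x`, `v = y`) and `snd ∘ φ` (with `u = y`, `v = x`) are of this form, so
`F (a, b) = 0` forces `a = c y`, `b = d x`, and then `(a, b) = c (y, x) + (d - c) (0, x)`.
-/

section AlgebraToPolynomial

variable {R A : Type*} [CommSemiring R] [CommRing A] [Algebra R A]

theorem sub_aeval_apply_mem_span_singleton {u v : A} (hgen : Algebra.adjoin R {u, v} = ⊤)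
    (f : A →ₐ[R] Polynomial R) (hu : f u = Polynomial.X) (hv : f v = 0) (a : A) :
    a - Polynomial.aeval u (f a) ∈ Ideal.span {v} := by
  set I := Ideal.span {v}
  have hcomp : (Ideal.Quotient.mkₐ R I).comp ((Polynomial.aeval u).comp f) =
      Ideal.Quotient.mkₐ R I := by
    refine AlgHom.ext_of_adjoin_eq_top hgen ?_
    rintro w (rfl | rfl)
    · simp [hu]
    · simp [hv, I]
  rw [← Ideal.Quotient.eq]
  exact (AlgHom.congr_fun hcomp a).symm

theorem dvd_of_apply_eq_zero {u v : A} (hgen : Algebra.adjoin R {u, v} = ⊤)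
    (f : A →ₐ[R] Polynomial R) (hu : f u = Polynomial.X) (hv : f v = 0) {a : A}
    (ha : f a = 0) : v ∣ a := by
  simpa [ha, Ideal.mem_span_singleton] using sub_aeval_apply_mem_span_singleton hgen f hu hv a

theorem apply_aeval_of_apply_eq_X {u : A} (f : A →ₐ[R] Polynomial R) (hu : f u = Polynomial.X)
    (p : Polynomial R) : f (Polynomial.aeval u p) = p := by
  rw [← Polynomial.aeval_algHom_apply, hu, Polynomial.aeval_X_left_apply]

end AlgebraToPolynomial

def φₐ : T →ₐ[ℂ] Polynomial ℂ × Polynomial ℂ :=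
  { φ with commutes' := fun c => (aeval _).commutes c }

theorem φ_x : φ x = (Polynomial.X, 0) := by
  simp [φ, x]

theorem φ_y : φ y = (0, Polynomial.X) := by
  simp [φ, y]

theorem adjoin_x_y : Algebra.adjoin ℂ {x, y} = ⊤ := by
  have : ({x, y} : Set T) = Ideal.Quotient.mkₐ ℂ _ '' Set.range X := by
    rw [← Set.range_comp]
    ext
    simp [Fin.exists_fin_two, x, y, eq_comm]
  rw [this, Algebra.adjoin_image, adjoin_range_X, Algebra.map_top, AlgHom.range_eq_top]
  exact Ideal.Quotient.mkₐ_surjective ℂ _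

theorem fst_φ_aeval_x (p : Polynomial ℂ) : (φ (Polynomial.aeval x p)).1 = p :=
  apply_aeval_of_apply_eq_X ((AlgHom.fst ℂ _ _).comp φₐ) (congr_arg Prod.fst φ_x) p

theorem snd_φ_aeval_y (q : Polynomial ℂ) : (φ (Polynomial.aeval y q)).2 = q :=
  apply_aeval_of_apply_eq_X ((AlgHom.snd ℂ _ _).comp φₐ) (congr_arg Prod.snd φ_y) q

theorem y_dvd_of_fst_φ_eq_zero {a : T} (ha : (φ a).1 = 0) : y ∣ a :=
  dvd_of_apply_eq_zero adjoin_x_y ((AlgHom.fst ℂ _ _).comp φₐ) (congr_arg Prod.fst φ_x)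
    (congr_arg Prod.fst φ_y) ha

theorem x_dvd_of_snd_φ_eq_zero {a : T} (ha : (φ a).2 = 0) : x ∣ a :=
  dvd_of_apply_eq_zero (Set.pair_comm x y ▸ adjoin_x_y) ((AlgHom.snd ℂ _ _).comp φₐ)
    (congr_arg Prod.snd φ_y) (congr_arg Prod.snd φ_x) ha

theorem rel_sup_span_eq_span_pair :
    rel ⊔ Submodule.span T {((0 : T), x)} = Submodule.span T {(y, x), (0, x)} := by
  rw [rel, ← Submodule.span_union, Set.singleton_union]

theorem stmt_2 :
    (∀ v w : T × T, F (v + w) = F v + F w) ∧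
    (∀ (t : T) (v : T × T), F (t • v) = ((φ t).1 * (F v).1, (φ t).2 * (F v).2)) ∧
    Function.Surjective F ∧
    (∀ v : T × T, F v = 0 ↔ v ∈ rel ⊔ Submodule.span T {((0 : T), x)}) := by
  refine ⟨fun v w => by simp [F], fun t v => by simp [F], fun pq => ?_, fun v => ?_⟩
  · exact ⟨(Polynomial.aeval x pq.1, Polynomial.aeval y pq.2),
      by simp [F, fst_φ_aeval_x, snd_φ_aeval_y]⟩
  rw [rel_sup_span_eq_span_pair, Submodule.mem_span_pair]
  constructor
  · intro hv
    obtain ⟨c, hc⟩ := y_dvd_of_fst_φ_eq_zero (congr_arg Prod.fst hv)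
    obtain ⟨d, hd⟩ := x_dvd_of_snd_φ_eq_zero (congr_arg Prod.snd hv)
    refine ⟨c, d - c, Prod.ext (by simp [hc, mul_comm]) ?_⟩
    simp only [hd, Prod.snd_add, Prod.smul_snd, smul_eq_mul]
    ring
  · rintro ⟨c, d, rfl⟩
    simp [F, φ_x, φ_y]
end
end

section
/- The map d restricted to ker Δ is surjective onto ℂ[x,y]/(x, y) ≅ ℂ: i.e., there exists (f,g,h) ∈ ℂ[x,y]³ with −2y·f − (3x²+2x)·g + (x³+x²−y²)·h = 0 and ∂g/∂x − ∂f/∂y + h having nonzero constant term. -/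
noncomputable section
open MvPolynomial

theorem Derivation.map_ofNat {R A M : Type*} [CommSemiring R] [CommSemiring A] [Algebra R A]
    [AddCommMonoid M] [Module A M] [Module R M] (D : Derivation R A M) (n : ℕ) [n.AtLeastTwo] :
    D (no_index (OfNat.ofNat n : A)) = 0 :=
  D.map_natCast n

theorem stmt_9 :
    ∃ f g h : P,
      -(2 * X 1) * f - (3 * X 0 ^ 2 + 2 * X 0) * g
        + (X 0 ^ 3 + X 0 ^ 2 - X 1 ^ 2) * h = 0 ∧
      MvPolynomial.coeff 0 (pderiv 0 g - pderiv 1 f + h) ≠ 0 := by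
  refine ⟨-3 * X 0 * X 1 - 2 * X 1, 2 * X 0 ^ 2 + 2 * X 0, 6 * X 0 + 4, by ring, ?_⟩
  have hd : pderiv 0 (2 * X 0 ^ 2 + 2 * X 0 : P) - pderiv 1 (-3 * X 0 * X 1 - 2 * X 1)
      + (6 * X 0 + 4) = 13 * X 0 + 8 := by
    simp only [map_add, map_sub, map_neg, Derivation.leibniz, Derivation.leibniz_pow,
      Derivation.map_ofNat, pderiv_X, Pi.single_eq_same, Pi.single_eq_of_ne zero_ne_one,
      smul_eq_mul, nsmul_eq_mul]
    ring
  rw [hd, ← constantCoeff_eq]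
  simp [constantCoeff_X, map_ofNat constantCoeff]
end
end

section
/- Let T = ℂ[x,y]/(xy). The torsion submodule of the T-module Ω = (T·dx ⊕ T·dy)/(x·dy + y·dx) is exactly T·(x·dy), and the quotient Ω/T·(x·dy) is torsion-free. -/
/- STATEMENT 11: Let T = ℂ[x,y]/(xy) and Ω = (T·dx ⊕ T·dy)/(x·dy + y·dx).
   The torsion submodule of Ω is exactly T·(x·dy), and the quotient
   Ω/T·(x·dy) is torsion-free. -/

noncomputable section
open MvPolynomial

abbrev Ω := (T × T) ⧸ rel

/-- The class of x·dy. -/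
def xdy : Ω := Submodule.Quotient.mk ((0 : T), x)

/-
The branch ideals (x) and (y) of T are prime and consist of zero divisors, each being killed by
the other coordinate; hence multiplication by a nonzerodivisor is injective modulo either of them.
Modulo T·(x dy), the module Ω becomes T²/((y) × (x)) ≅ T/(y) ⊕ T/(x), which is therefore
torsion-free. On the other hand x dy is killed by the nonzerodivisor x + y, because
(x + y)·(0, x) = x·(y, x). A submodule of torsion elements with torsion-free quotient is the whole
torsion submodule.
-/

open scoped nonZeroDivisors

namespace Submodule

variable {R M : Type*} [CommRing R] [AddCommGroup M] [Module R M]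

theorem torsion_quotient_eq_bot_of_smul_mem {N : Submodule R M}
    (h : ∀ a ∈ R⁰, ∀ m : M, a • m ∈ N → m ∈ N) : torsion R (M ⧸ N) = ⊥ := by
  refine eq_bot_iff.mpr fun z ⟨a, ha⟩ => ?_
  obtain ⟨m, rfl⟩ := N.mkQ_surjective z
  rw [Submonoid.smul_def, mkQ_apply, ← Quotient.mk_smul, Quotient.mk_eq_zero] at ha
  rw [mem_bot, mkQ_apply, Quotient.mk_eq_zero]
  exact h a a.2 m ha

theorem torsion_eq_of_le_of_torsion_quotient_eq_bot {N : Submodule R M}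
    (hN : N ≤ torsion R M) (hQ : torsion R (M ⧸ N) = ⊥) : torsion R M = N := by
  refine le_antisymm (fun m ⟨a, ha⟩ => ?_) hN
  have hm : N.mkQ m ∈ torsion R (M ⧸ N) :=
    ⟨a, by rw [Submonoid.smul_def, ← map_smul, ← Submonoid.smul_def, ha, map_zero]⟩
  rwa [hQ, mem_bot, mkQ_apply, Quotient.mk_eq_zero] at hm

end Submodule

namespace Ideal

variable {R : Type*} [CommRing R]

theorem notMem_nonZeroDivisors_of_mem_span_singleton {u v f : R} (huv : u * v = 0)
    (hv : v ≠ 0) (hf : f ∈ span {u}) : f ∉ R⁰ := fun hf' => by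
  obtain ⟨c, rfl⟩ := mem_span_singleton'.mp hf
  exact hv (hf'.2 v (by linear_combination c * huv))

theorem IsPrime.mem_of_mul_mem_of_mem_nonZeroDivisors {I : Ideal R} (hI : I.IsPrime)
    (hI₀ : ∀ f ∈ I, f ∉ R⁰) {a m : R} (ha : a ∈ R⁰) (h : a * m ∈ I) : m ∈ I :=
  (hI.mem_or_mem h).resolve_left fun h' => hI₀ a h' ha

end Ideal

namespace CrossingLines

open Ideal

variable {S : Type*} [CommRing S] {u v : S}
  (huv : u * v = 0) (hu : (span {u}).IsPrime) (hv : (span {v}).IsPrime)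
  (hu_v : u ∉ span {v}) (hv_u : v ∉ span {u})

include huv hu hv hu_v hv_u in
theorem add_mem_nonZeroDivisors : u + v ∈ S⁰ := by
  refine mem_nonZeroDivisors_iff_right.mpr fun f hf => ?_
  have hfu : u * f ∈ span {v} := by
    have : u * f = v * (-f) := by linear_combination hf
    exact this ▸ mem_span_singleton'.mpr ⟨-f, mul_comm _ _⟩
  obtain ⟨g, rfl⟩ := mem_span_singleton'.mp ((hv.mem_or_mem hfu).resolve_left hu_v)
  have hgv : v * v * g ∈ span {u} := by
    have : v * v * g = u * (-g * v) := by linear_combination hf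
    exact this ▸ mem_span_singleton'.mpr ⟨-g * v, mul_comm _ _⟩
  have hvv : v * v ∉ span {u} := fun h => hv_u ((hu.mem_or_mem h).elim id id)
  obtain ⟨h, rfl⟩ := mem_span_singleton'.mp ((hu.mem_or_mem hgv).resolve_left hvv)
  linear_combination h * huv

include huv hu hv hu_v hv_u in
theorem mem_prod_of_smul_mem {a : S} (ha : a ∈ S⁰) {w : S × S}
    (h : a • w ∈ Submodule.prod (span {v}) (span {u})) :
    w ∈ Submodule.prod (span {v}) (span {u}) := by
  have hu₀ : u ≠ 0 := fun h => hu_v (h ▸ zero_mem _)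
  have hv₀ : v ≠ 0 := fun h => hv_u (h ▸ zero_mem _)
  exact ⟨hv.mem_of_mul_mem_of_mem_nonZeroDivisors
      (fun f => notMem_nonZeroDivisors_of_mem_span_singleton (mul_comm u v ▸ huv) hu₀) ha h.1,
    hu.mem_of_mul_mem_of_mem_nonZeroDivisors
      (fun f => notMem_nonZeroDivisors_of_mem_span_singleton huv hv₀) ha h.2⟩

theorem span_pair_eq_prod :
    Submodule.span S {(v, u), (0, u)} = Submodule.prod (span {v}) (span {u}) := by
  refine le_antisymm (Submodule.span_le.mpr ?_) fun w ⟨hw₁, hw₂⟩ => ?_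
  · rintro _ (rfl | rfl)
    · exact ⟨mem_span_singleton_self v, mem_span_singleton_self u⟩
    · exact ⟨zero_mem _, mem_span_singleton_self u⟩
  obtain ⟨a, ha⟩ := mem_span_singleton'.mp hw₁
  obtain ⟨b, hb⟩ := mem_span_singleton'.mp hw₂
  refine Submodule.mem_span_pair.mpr ⟨a, b - a, ?_⟩
  ext <;> simp only [Prod.smul_mk, smul_eq_mul, mul_zero, Prod.mk_add_mk, add_zero, ← ha, ← hb]
  ring

theorem comap_mkQ_span_mk :
    (Submodule.span S {Submodule.Quotient.mk (0, u)}).comap (Submodule.span S {(v, u)}).mkQ =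
      Submodule.prod (span {v}) (span {u}) := by
  have h : Submodule.span S {Submodule.Quotient.mk (0, u)} =
      (Submodule.span S {((0 : S), u)}).map (Submodule.span S {(v, u)}).mkQ := by
    rw [Submodule.map_span, Set.image_singleton]; rfl
  rw [h, Submodule.comap_map_mkQ, ← Submodule.span_union, Set.singleton_union, span_pair_eq_prod]

include huv hu hv hu_v hv_u in
theorem torsion_quotient_span_mk_eq_bot :
    Submodule.torsion S (((S × S) ⧸ Submodule.span S {(v, u)}) ⧸
      Submodule.span S {Submodule.Quotient.mk (0, u)}) = ⊥ := by
  refine Submodule.torsion_quotient_eq_bot_of_smul_mem fun a ha w hw => ?_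
  obtain ⟨w, rfl⟩ := Submodule.mkQ_surjective _ w
  rw [← map_smul] at hw
  rw [← Submodule.mem_comap, comap_mkQ_span_mk] at hw ⊢
  exact mem_prod_of_smul_mem huv hu hv hu_v hv_u ha hw

include huv hu hv hu_v hv_u in
theorem mk_mem_torsion :
    (Submodule.Quotient.mk (0, u) : (S × S) ⧸ Submodule.span S {(v, u)}) ∈
      Submodule.torsion S ((S × S) ⧸ Submodule.span S {(v, u)}) := by
  refine ⟨⟨u + v, add_mem_nonZeroDivisors huv hu hv hu_v hv_u⟩, ?_⟩
  rw [Submonoid.mk_smul, ← Submodule.Quotient.mk_smul, Submodule.Quotient.mk_eq_zero]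
  refine Submodule.mem_span_singleton.mpr ⟨u, ?_⟩
  ext <;> simp only [Prod.smul_mk, smul_eq_mul, mul_zero]
  · linear_combination huv
  · linear_combination -huv

include huv hu hv hu_v hv_u in
theorem torsion_eq_span_mk :
    Submodule.torsion S ((S × S) ⧸ Submodule.span S {(v, u)}) =
      Submodule.span S {Submodule.Quotient.mk (0, u)} :=
  Submodule.torsion_eq_of_le_of_torsion_quotient_eq_bot
    (Submodule.span_le.mpr (Set.singleton_subset_iff.mpr (mk_mem_torsion huv hu hv hu_v hv_u)))
    (torsion_quotient_span_mk_eq_bot huv hu hv hu_v hv_u)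

end CrossingLines

section CoordinateAxes

open Ideal

theorem span_X_zero_mul_X_one_le (i : Fin 2) : span {X 0 * X 1} ≤ span {(X i : P)} := by
  refine span_singleton_le_span_singleton.mpr ?_
  fin_cases i
  exacts [dvd_mul_right _ _, dvd_mul_left _ _]

theorem span_mk_X_eq_map (i : Fin 2) :
    span {(Ideal.Quotient.mk _ (X i) : T)} = (span {(X i : P)}).map (Ideal.Quotient.mk _) := by
  rw [map_span, Set.image_singleton]

theorem isPrime_span_mk_X (i : Fin 2) : (span {(Ideal.Quotient.mk _ (X i) : T)}).IsPrime := by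
  have : (span {(X i : P)}).IsPrime := (span_singleton_prime (X_ne_zero i)).mpr X_prime
  rw [span_mk_X_eq_map]
  exact map_isPrime_of_surjective Ideal.Quotient.mk_surjective
    (by rw [mk_ker]; exact span_X_zero_mul_X_one_le i)

theorem mk_X_mem_span_mk_X_iff (i j : Fin 2) :
    (Ideal.Quotient.mk _ (X i) : T) ∈ span {Ideal.Quotient.mk _ (X j)} ↔ i = j := by
  rw [span_mk_X_eq_map, mem_quotient_iff_mem (span_X_zero_mul_X_one_le j), mem_span_singleton,
    X_dvd_X, eq_comm]

theorem x_mul_y : x * y = 0 := by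
  rw [x, y, ← map_mul, Ideal.Quotient.eq_zero_iff_mem]
  exact mem_span_singleton_self _

end CoordinateAxes

theorem stmt_11 :
    Submodule.torsion T Ω = Submodule.span T {xdy} ∧
    Submodule.torsion T (Ω ⧸ Submodule.span T {xdy}) = ⊥ := by
  have hx : (Ideal.span {x}).IsPrime := isPrime_span_mk_X 0
  have hy : (Ideal.span {y}).IsPrime := isPrime_span_mk_X 1
  have hx_y : x ∉ Ideal.span {y} := (mk_X_mem_span_mk_X_iff 0 1).not.mpr (by decide)
  have hy_x : y ∉ Ideal.span {x} := (mk_X_mem_span_mk_X_iff 1 0).not.mpr (by decide)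
  exact ⟨CrossingLines.torsion_eq_span_mk x_mul_y hx hy hx_y hy_x,
    CrossingLines.torsion_quotient_span_mk_eq_bot x_mul_y hx hy hx_y hy_x⟩
end
end
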